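/- arXiv:2601.19772 — 2 statements merged into one kernel-verified Lean document; each statement's English description precedes it below -/
import Mathlib

section
/- If C is a groupoid, then the monoid M(C) is a group: for every normal form w = (f₁, …, fₙ), the reversed entrywise-inverted word w̄ = (fₙ⁻¹, …, f₁⁻¹) is also a normal form, and w • w̄ = [] = w̄ • w. -/
/-!
Rewriting is modelled by an action: pushing a letter onto a reduced word (`reduceCons`)
and folding from the right gives `normalize`, which fixes normal forms and is constant along
rewrite steps, the one nontrivial point being that pushing `f` and then `g` equals pushing
`f ≫ g`. Hence a word reduces to at most one normal form. In a groupoid, `w̄ ++ w` collapses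
to `[]` from the middle outwards: `f⁻¹, f` composes to an identity, which is deleted.
-/

open CategoryTheory

/-- A word of morphisms in a category `C`: a finite list of morphisms, each recorded
with its source and target. -/
abbrev CatWord (C : Type*) [Category C] : Type _ := List (Σ a b : C, a ⟶ b)

/-- The rewrite relation on words of morphisms: delete an identity entry, or replace
two adjacent composable entries `(f, g)` by the single entry `g ∘ f`. -/
inductive RwStep {C : Type*} [Category C] : CatWord C → CatWord C → Prop
  | del (u v : CatWord C) (a : C) :
      RwStep (u ++ ⟨a, a, 𝟙 a⟩ :: v) (u ++ v)
  | comp (u v : CatWord C) {a b c : C} (f : a ⟶ b) (g : b ⟶ c) :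
      RwStep (u ++ ⟨a, b, f⟩ :: ⟨b, c, g⟩ :: v) (u ++ ⟨a, c, f ≫ g⟩ :: v)

/-- A word is a normal form if no rewrite step applies to it. -/
def IsNormalForm {C : Type*} [Category C] (w : CatWord C) : Prop :=
  ∀ z : CatWord C, ¬ RwStep w z

/-- The reversed entrywise-inverted word `w̄` of a word `w` in a groupoid. -/
def wordInv {C : Type*} [Groupoid C] (w : CatWord C) : CatWord C :=
  w.reverse.map fun x => ⟨x.2.1, x.1, Groupoid.inv x.2.2⟩

namespace CatWord

abbrev Entry (C : Type*) [Category C] : Type _ := Σ a b : C, a ⟶ b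

section Category

variable {C : Type*} [Category C]

def IsIdEntry (x : Entry C) : Prop := ∃ h : x.1 = x.2.1, x.2.2 = eqToHom h

lemma isIdEntry_mk_iff {a b : C} (f : a ⟶ b) :
    IsIdEntry (⟨a, b, f⟩ : Entry C) ↔ ∃ h : a = b, f = eqToHom h := Iff.rfl

lemma isIdEntry_id (a : C) : IsIdEntry (⟨a, a, 𝟙 a⟩ : Entry C) := ⟨rfl, rfl⟩

def Reduced (w : CatWord C) : Prop :=
  (∀ x ∈ w, ¬ IsIdEntry x) ∧ w.IsChain (fun x y => x.2.1 ≠ y.1)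

lemma reduced_nil : Reduced ([] : CatWord C) := ⟨by simp, List.isChain_nil⟩

lemma reduced_cons_iff {x : Entry C} {t : CatWord C} :
    Reduced (x :: t) ↔ ¬ IsIdEntry x ∧ (∀ y ∈ t.head?, x.2.1 ≠ y.1) ∧ Reduced t := by
  simp only [Reduced, List.mem_cons, forall_eq_or_imp, List.isChain_cons]
  tauto

lemma Reduced.tail {x : Entry C} {t : CatWord C} (h : Reduced (x :: t)) : Reduced t :=
  (reduced_cons_iff.mp h).2.2

lemma rwStep_cons (x : Entry C) {t z : CatWord C} (h : RwStep t z) :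
    RwStep (x :: t) (x :: z) := by
  cases h with
  | del u v a => exact RwStep.del (x :: u) v a
  | comp u v f g => exact RwStep.comp (x :: u) v f g

lemma not_reduced_of_rwStep {w z : CatWord C} (h : RwStep w z) : ¬ Reduced w := by
  cases h with
  | del u v a =>
    induction u with
    | nil => exact fun hw => (reduced_cons_iff.mp hw).1 (isIdEntry_id a)
    | cons _ u ih => exact fun hw => ih hw.tail
  | comp u v f g =>
    induction u with
    | nil => exact fun hw => (reduced_cons_iff.mp hw).2.1 _ rfl rfl
    | cons _ u ih => exact fun hw => ih hw.tail

lemma isNormalForm_iff_reduced {w : CatWord C} : IsNormalForm w ↔ Reduced w := by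
  refine ⟨fun hw => ?_, fun hw z hz => not_reduced_of_rwStep hz hw⟩
  induction w with
  | nil => exact reduced_nil
  | cons x t ih =>
    refine reduced_cons_iff.mpr ⟨?_, ?_, ih fun z hz => hw (x :: z) (rwStep_cons x hz)⟩
    · rintro ⟨h, hx⟩
      obtain ⟨a, b, f⟩ := x
      obtain rfl : a = b := h
      obtain rfl : f = 𝟙 a := hx
      exact hw t (RwStep.del [] t a)
    · rintro ⟨b', c, g⟩ hy (rfl : x.2.1 = b')
      obtain ⟨t', rfl⟩ := List.head?_eq_some_iff.mp hy
      exact hw _ (RwStep.comp [] t' x.2.2 g)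

open scoped Classical in
/-- `reduceCons x t = nf (x :: t)` whenever `t` is reduced. -/
noncomputable def reduceCons : Entry C → CatWord C → CatWord C
  | x, [] => if IsIdEntry x then [] else [x]
  | x, y :: t =>
    if IsIdEntry x then y :: t
    else if h : x.2.1 = y.1 then reduceCons ⟨x.1, y.2.1, x.2.2 ≫ eqToHom h ≫ y.2.2⟩ t
    else x :: y :: t

lemma reduceCons_of_isIdEntry {x : Entry C} (hx : IsIdEntry x) (t : CatWord C) :
    reduceCons x t = t := by
  cases t <;> simp [reduceCons, hx]

lemma reduceCons_id (a : C) (t : CatWord C) : reduceCons ⟨a, a, 𝟙 a⟩ t = t :=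
  reduceCons_of_isIdEntry (isIdEntry_id a) t

lemma reduceCons_nil {x : Entry C} (hx : ¬ IsIdEntry x) : reduceCons x [] = [x] := by
  simp [reduceCons, hx]

lemma reduceCons_cons_of_comp {a b c : C} {f : a ⟶ b} (hf : ¬ IsIdEntry ⟨a, b, f⟩)
    (g : b ⟶ c) (t : CatWord C) :
    reduceCons ⟨a, b, f⟩ (⟨b, c, g⟩ :: t) = reduceCons ⟨a, c, f ≫ g⟩ t := by
  simp [reduceCons, hf]

lemma reduceCons_cons_of_ne {x y : Entry C} (hx : ¬ IsIdEntry x) (h : x.2.1 ≠ y.1)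
    (t : CatWord C) : reduceCons x (y :: t) = x :: y :: t := by
  simp [reduceCons, hx, h]

lemma reduceCons_of_reduced {x : Entry C} {t : CatWord C} (h : Reduced (x :: t)) :
    reduceCons x t = x :: t := by
  obtain ⟨hx, hxt, -⟩ := reduced_cons_iff.mp h
  cases t with
  | nil => exact reduceCons_nil hx
  | cons y t => exact reduceCons_cons_of_ne hx (hxt y rfl) t

lemma reduced_reduceCons (x : Entry C) {t : CatWord C} (ht : Reduced t) :
    Reduced (reduceCons x t) := by
  induction t generalizing x with
  | nil =>
    by_cases hx : IsIdEntry x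
    · simpa [reduceCons_of_isIdEntry hx] using ht
    · simpa [reduceCons_nil hx, reduced_cons_iff] using ⟨hx, reduced_nil⟩
  | cons y t ih =>
    by_cases hx : IsIdEntry x
    · simpa [reduceCons_of_isIdEntry hx] using ht
    by_cases h : x.2.1 = y.1
    · obtain ⟨a, b, f⟩ := x
      obtain ⟨b, c, g⟩ := y
      obtain rfl : _ = b := h
      exact reduceCons_cons_of_comp hx g t ▸ ih _ ht.tail
    · rw [reduceCons_cons_of_ne hx h]
      exact reduced_cons_iff.mpr ⟨hx, by simpa using h, ht⟩

noncomputable def normalize (w : CatWord C) : CatWord C := w.foldr reduceCons []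

lemma normalize_cons (x : Entry C) (t : CatWord C) :
    normalize (x :: t) = reduceCons x (normalize t) := rfl

lemma reduced_normalize (w : CatWord C) : Reduced (normalize w) := by
  induction w with
  | nil => exact reduced_nil
  | cons x t ih => exact reduced_reduceCons x ih

lemma normalize_of_reduced {w : CatWord C} (hw : Reduced w) : normalize w = w := by
  induction w with
  | nil => rfl
  | cons x t ih => rw [normalize_cons, ih hw.tail, reduceCons_of_reduced hw]

lemma reduceCons_cons_of_reduced {a c d : C} (h : a ⟶ c) {k : c ⟶ d} {t : CatWord C}
    (hkt : Reduced (⟨c, d, k⟩ :: t)) :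
    reduceCons ⟨a, c, h⟩ (⟨c, d, k⟩ :: t) = reduceCons ⟨a, d, h ≫ k⟩ t := by
  by_cases hh : IsIdEntry ⟨a, c, h⟩
  · obtain ⟨rfl, rfl⟩ := (isIdEntry_mk_iff h).mp hh
    simp [reduceCons_id, reduceCons_of_reduced hkt]
  · exact reduceCons_cons_of_comp hh k t

lemma reduceCons_reduceCons {a b c : C} (f : a ⟶ b) (g : b ⟶ c) {t : CatWord C}
    (ht : Reduced t) :
    reduceCons ⟨a, b, f⟩ (reduceCons ⟨b, c, g⟩ t) = reduceCons ⟨a, c, f ≫ g⟩ t := by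
  by_cases hf : IsIdEntry ⟨a, b, f⟩
  · obtain ⟨rfl, rfl⟩ := (isIdEntry_mk_iff f).mp hf
    simp [reduceCons_id]
  induction t generalizing c with
  | nil =>
    by_cases hg : IsIdEntry ⟨b, c, g⟩
    · obtain ⟨rfl, rfl⟩ := (isIdEntry_mk_iff g).mp hg
      simp [reduceCons_id]
    · rw [reduceCons_nil hg, reduceCons_cons_of_comp hf]
  | cons y t ih =>
    by_cases hg : IsIdEntry ⟨b, c, g⟩
    · obtain ⟨rfl, rfl⟩ := (isIdEntry_mk_iff g).mp hg
      simp [reduceCons_id]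
    by_cases h : c = y.1
    · obtain ⟨c, d, k⟩ := y
      obtain rfl : _ = c := h
      rw [reduceCons_cons_of_comp hg, ih _ ht.tail, reduceCons_cons_of_reduced _ ht,
        Category.assoc]
    · rw [reduceCons_cons_of_ne hg h, reduceCons_cons_of_comp hf]

lemma normalize_append (u l : CatWord C) :
    normalize (u ++ l) = u.foldr reduceCons (normalize l) :=
  List.foldr_append

lemma normalize_eq_of_rwStep {u v : CatWord C} (h : RwStep u v) : normalize u = normalize v := by
  cases h with
  | del u v a => simp only [normalize_append, normalize_cons, reduceCons_id]
  | comp u v f g =>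
    simp only [normalize_append, normalize_cons, reduceCons_reduceCons f g (reduced_normalize v)]

lemma normalize_eq_of_reflTransGen {u v : CatWord C} (h : Relation.ReflTransGen RwStep u v) :
    normalize u = normalize v := by
  induction h with
  | refl => rfl
  | tail _ h ih => exact ih.trans (normalize_eq_of_rwStep h)

theorem eq_of_reflTransGen_of_isNormalForm {u v₁ v₂ : CatWord C}
    (h₁ : Relation.ReflTransGen RwStep u v₁) (h₂ : Relation.ReflTransGen RwStep u v₂)
    (hv₁ : IsNormalForm v₁) (hv₂ : IsNormalForm v₂) : v₁ = v₂ := by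
  rw [← normalize_of_reduced (isNormalForm_iff_reduced.mp hv₁),
    ← normalize_of_reduced (isNormalForm_iff_reduced.mp hv₂),
    ← normalize_eq_of_reflTransGen h₁, normalize_eq_of_reflTransGen h₂]

lemma isNormalForm_nil : IsNormalForm ([] : CatWord C) :=
  isNormalForm_iff_reduced.mpr reduced_nil

end Category

section Groupoid

variable {C : Type*} [Groupoid C]

lemma wordInv_cons (x : Entry C) (t : CatWord C) :
    wordInv (x :: t) = wordInv t ++ [⟨x.2.1, x.1, Groupoid.inv x.2.2⟩] := by
  simp [wordInv]

lemma wordInv_wordInv (w : CatWord C) : wordInv (wordInv w) = w := by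
  simp [wordInv, Function.comp_def]

lemma reflTransGen_wordInv_append_self :
    ∀ w : CatWord C, Relation.ReflTransGen RwStep (wordInv w ++ w) []
  | [] => .refl
  | ⟨a, b, f⟩ :: t => by
    rw [wordInv_cons, List.append_assoc, List.singleton_append]
    refine .head (RwStep.comp (wordInv t) t (Groupoid.inv f) f) ?_
    rw [Groupoid.inv_comp]
    exact .head (RwStep.del (wordInv t) t b) (reflTransGen_wordInv_append_self t)

lemma reduced_wordInv {w : CatWord C} (hw : Reduced w) : Reduced (wordInv w) := by
  refine ⟨?_, ?_⟩
  · simp only [wordInv, List.mem_map, List.mem_reverse]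
    rintro _ ⟨⟨a, b, f⟩, hf, rfl⟩ hinv
    obtain ⟨rfl, hinv⟩ := (isIdEntry_mk_iff (Groupoid.inv f)).mp hinv
    exact hw.1 _ hf ⟨rfl, by simpa using congrArg Groupoid.inv hinv⟩
  · rw [wordInv, List.isChain_map, List.isChain_reverse]
    exact hw.2.imp fun _ _ h e => h e.symm

lemma _root_.IsNormalForm.wordInv {w : CatWord C} (hw : IsNormalForm w) :
    IsNormalForm (wordInv w) :=
  isNormalForm_iff_reduced.mpr (reduced_wordInv (isNormalForm_iff_reduced.mp hw))

end Groupoid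

end CatWord

/-- If `C` is a groupoid, then the monoid `M(C)` is a group: for every normal form `w`,
the reversed entrywise-inverted word `w̄` is also a normal form, and
`w • w̄ = [] = w̄ • w`, where `x • y := nf (y ++ x)`.  Here `nf` is any function
assigning to each word its (unique) normal form. -/
theorem normal_forms_group (C : Type*) [Groupoid C] (nf : CatWord C → CatWord C)
    (hnf : ∀ w : CatWord C, Relation.ReflTransGen RwStep w (nf w) ∧ IsNormalForm (nf w))
    (w : CatWord C) (hw : IsNormalForm w) :
    IsNormalForm (wordInv w) ∧
      -- `w • w̄ = []` and `w̄ • w = []`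
      nf (wordInv w ++ w) = [] ∧ nf (w ++ wordInv w) = [] := by
  have nf_eq_nil {u : CatWord C} (hu : Relation.ReflTransGen RwStep u []) : nf u = [] :=
    CatWord.eq_of_reflTransGen_of_isNormalForm (hnf u).1 hu (hnf u).2 CatWord.isNormalForm_nil
  refine ⟨hw.wordInv, nf_eq_nil (CatWord.reflTransGen_wordInv_append_self w), ?_⟩
  simpa only [CatWord.wordInv_wordInv] using
    nf_eq_nil (CatWord.reflTransGen_wordInv_append_self (wordInv w))
end

section
/- (Embeddability criterion.) A partial group M embeds in a group if and only if every word in M is kind; that is, if and only if for all f, g ∈ M and every word w ∈ List M, w ⇝* [f] and w ⇝* [g] imply f = g. -/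
/-- A partial group in Chermak's sense: a nonempty set `M` with a domain `D` of words
containing all words of length at most `1`, a product `Π` (here `pi`, given as a total
function whose axioms only concern words in `D`), and an involution `inv`. -/
structure PartialGroup (M : Type u) where
  /-- The underlying set is nonempty. -/
  nonempty : Nonempty M
  /-- The set of words on which the product is defined. -/
  D : Set (List M)
  /-- The product `Π : D → M` (extended arbitrarily to all words). -/
  pi : List M → M
  /-- The inversion `x ↦ x⁻¹`. -/
  inv : M → M
  /-- `D` contains all words of length at most `1`. -/
  mem_D_of_length_le_one : ∀ w : List M, w.length ≤ 1 → w ∈ D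
  /-- (i) `Π [f] = f`. -/
  pi_single : ∀ f : M, pi [f] = f
  /-- (ii) if `u ++ v ∈ D` then `u ∈ D`. -/
  mem_D_of_append_left : ∀ u v : List M, u ++ v ∈ D → u ∈ D
  /-- (ii) if `u ++ v ∈ D` then `v ∈ D`. -/
  mem_D_of_append_right : ∀ u v : List M, u ++ v ∈ D → v ∈ D
  /-- (iii) if `u ++ v ++ w ∈ D` then `u ++ [Π v] ++ w ∈ D`. -/
  mem_D_contract : ∀ u v w : List M, u ++ v ++ w ∈ D → u ++ [pi v] ++ w ∈ D
  /-- (iii) if `u ++ v ++ w ∈ D` then `Π (u ++ v ++ w) = Π (u ++ [Π v] ++ w)`. -/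
  pi_contract : ∀ u v w : List M, u ++ v ++ w ∈ D → pi (u ++ v ++ w) = pi (u ++ [pi v] ++ w)
  /-- `inv` is an involution. -/
  inv_inv : ∀ x : M, inv (inv x) = x
  /-- (iv) if `w ∈ D` then `w⁻¹ ++ w ∈ D`, where `w⁻¹` is the entrywise-inverted
  reverse of `w`. -/
  mem_D_inv_append : ∀ w ∈ D, (w.reverse.map inv) ++ w ∈ D
  /-- (iv) if `w ∈ D` then `Π (w⁻¹ ++ w) = 1 = Π []`. -/
  pi_inv_append : ∀ w ∈ D, pi ((w.reverse.map inv) ++ w) = pi []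

/-- The formal inverse of a word: reverse it and invert each entry. -/
def PartialGroup.wInv {M : Type u} (P : PartialGroup M) (w : List M) : List M :=
  w.reverse.map P.inv

/-- The single-contraction relation `⇝` on words in a partial group:
`u ++ [a, b] ++ v ⇝ u ++ [Π [a, b]] ++ v` whenever `[a, b] ∈ D`. -/
def PartialGroup.Contract {M : Type u} (P : PartialGroup M) (x y : List M) : Prop :=
  ∃ (u v : List M) (a b : M), [a, b] ∈ P.D ∧
    x = u ++ [a, b] ++ v ∧ y = u ++ [P.pi [a, b]] ++ v

/-- The reflexive–transitive closure `⇝*` of the single-contraction relation. -/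
def PartialGroup.ContractStar {M : Type u} (P : PartialGroup M) : List M → List M → Prop :=
  Relation.ReflTransGen P.Contract

/-- A partial group embeds in a group if there is a group `G` and an injective map
`φ : M → G` with `φ (Π w) = (w.map φ).prod` for every `w ∈ D`. -/
def PartialGroup.EmbedsInGroup {M : Type u} (P : PartialGroup M) : Prop :=
  ∃ (G : Type u) (_ : Group G) (φ : M → G), Function.Injective φ ∧
    ∀ w ∈ P.D, φ (P.pi w) = (w.map φ).prod

/-- A word `w` is kind if whenever `w ⇝* [f]` and `w ⇝* [g]`, one has `f = g`. -/
def PartialGroup.Kind {M : Type u} (P : PartialGroup M) (w : List M) : Prop :=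
  ∀ f g : M, P.ContractStar w [f] → P.ContractStar w [g] → f = g

/-!
If `φ : M → G` is an embedding, a contraction does not change the product of the `φ`-images
of a word, so `w ⇝* [f]` and `w ⇝* [g]` give `φ f = φ g`.

Conversely, relate two words when they have a common `⇝*`-ancestor. Because `v v⁻¹` and
`v⁻¹ v` contract to `[1]`, and a letter `1` can be contracted away, for nonempty `v` a
common ancestor of `u, v` and one of `v, w` combine into one of `u, w`. This relation is
compatible with concatenation, so words modulo it form a monoid, in fact a group (`w⁻¹`
inverts `w`). The letters give a map `M → G` respecting `Π` on `D` because `w ⇝* [Π w]`,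
and it is injective precisely because every word is kind.
-/

namespace PartialGroup

variable {M : Type u} {P : PartialGroup M}

theorem ContractStar.refl (u : List M) : P.ContractStar u u :=
  Relation.ReflTransGen.refl

theorem Contract.contractStar {u v : List M} (h : P.Contract u v) : P.ContractStar u v :=
  Relation.ReflTransGen.single h

theorem Contract.append_append {a b : List M} (h : P.Contract a b) (x y : List M) :
    P.Contract (x ++ a ++ y) (x ++ b ++ y) := by
  obtain ⟨u, v, c, d, hD, rfl, rfl⟩ := h
  exact ⟨x ++ u, v ++ y, c, d, hD, by simp, by simp⟩

theorem ContractStar.append {a b c d : List M} (hab : P.ContractStar a b)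
    (hcd : P.ContractStar c d) : P.ContractStar (a ++ c) (b ++ d) := by
  have h₁ := Relation.ReflTransGen.lift (· ++ c)
    (fun _ _ h => by simpa using h.append_append [] c) _ _ hab
  have h₂ := Relation.ReflTransGen.lift (b ++ ·)
    (fun _ _ h => by simpa using h.append_append b []) _ _ hcd
  exact h₁.trans h₂

theorem ne_nil_of_contractStar {z u : List M} (h : P.ContractStar z u) (hu : u ≠ []) :
    z ≠ [] := by
  rcases Relation.ReflTransGen.cases_head h with rfl | ⟨_, ⟨_, _, _, _, _, rfl, _⟩, _⟩
  · exact hu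
  · simp

theorem prod_map_eq_of_contractStar {G : Type*} [Monoid G] {φ : M → G}
    (hφ : ∀ w ∈ P.D, φ (P.pi w) = (w.map φ).prod) {x y : List M} (h : P.ContractStar x y) :
    (x.map φ).prod = (y.map φ).prod := by
  induction h with
  | refl => rfl
  | tail _ hstep ih =>
    obtain ⟨u, v, a, b, hab, rfl, rfl⟩ := hstep
    simp [ih, hφ _ hab, mul_assoc]

theorem EmbedsInGroup.kind (h : P.EmbedsInGroup) (w : List M) : P.Kind w := by
  obtain ⟨G, _, φ, hφinj, hφ⟩ := h
  intro f g hf hg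
  apply hφinj
  simpa using (prod_map_eq_of_contractStar hφ hf).symm.trans (prod_map_eq_of_contractStar hφ hg)

variable (P)

theorem singleton_mem_D (x : M) : [x] ∈ P.D :=
  P.mem_D_of_length_le_one _ (by simp)

theorem insert_one_mem_D {u v : List M} (h : u ++ v ∈ P.D) : u ++ [P.pi []] ++ v ∈ P.D :=
  P.mem_D_contract u [] v (by simpa using h)

theorem pi_insert_one {u v : List M} (h : u ++ v ∈ P.D) :
    P.pi (u ++ [P.pi []] ++ v) = P.pi (u ++ v) := by
  have h' := P.pi_contract u [] v (by simpa using h)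
  simpa using h'.symm

theorem wInv_wInv (w : List M) : P.wInv (P.wInv w) = w := by
  simp [wInv, Function.comp_def, P.inv_inv]

theorem contract_one_left (u v : List M) (x : M) :
    P.Contract (u ++ [P.pi [], x] ++ v) (u ++ [x] ++ v) := by
  have h := P.singleton_mem_D x
  have hD : [P.pi [], x] ∈ P.D := by simpa using P.insert_one_mem_D (u := []) h
  have hpi : P.pi [P.pi [], x] = x := by
    simpa [P.pi_single] using P.pi_insert_one (u := []) h
  exact ⟨u, v, _, _, hD, rfl, by rw [hpi]⟩

theorem contract_one_right (u v : List M) (x : M) :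
    P.Contract (u ++ [x, P.pi []] ++ v) (u ++ [x] ++ v) := by
  have h := P.singleton_mem_D x
  have hD : [x, P.pi []] ∈ P.D := by simpa using P.insert_one_mem_D (u := [x]) (v := []) h
  have hpi : P.pi [x, P.pi []] = x := by
    simpa [P.pi_single] using P.pi_insert_one (u := [x]) (v := []) h
  exact ⟨u, v, _, _, hD, rfl, by rw [hpi]⟩

theorem contract_mul_inv (u v : List M) (x : M) :
    P.Contract (u ++ [x, P.inv x] ++ v) (u ++ [P.pi []] ++ v) := by
  have hD := P.mem_D_inv_append [P.inv x] (P.singleton_mem_D _)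
  have hpi := P.pi_inv_append [P.inv x] (P.singleton_mem_D _)
  simp only [List.reverse_singleton, List.map_singleton, P.inv_inv,
    List.singleton_append] at hD hpi
  exact ⟨u, v, _, _, hD, rfl, by rw [hpi]⟩

theorem contract_drop_one (u v : List M) (h : u ++ v ≠ []) :
    P.Contract (u ++ [P.pi []] ++ v) (u ++ v) := by
  rcases v with _ | ⟨y, v⟩
  · obtain ⟨u, x, rfl⟩ := (List.eq_nil_or_concat u).resolve_left (by simpa using h)
    simpa using P.contract_one_right u [] x
  · simpa using P.contract_one_left u v y

theorem contractStar_cancel (u w v : List M) (h : u ++ v ≠ []) :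
    P.ContractStar (u ++ w ++ P.wInv w ++ v) (u ++ v) := by
  induction w generalizing u v with
  | nil =>
    simp only [wInv, List.reverse_nil, List.map_nil, List.append_nil]
    exact .refl _
  | cons x t ih =>
    have hpeel : u ++ x :: t ++ P.wInv (x :: t) ++ v
        = u ++ [x] ++ t ++ P.wInv t ++ ([P.inv x] ++ v) := by simp [wInv]
    have hinner := ih (u ++ [x]) ([P.inv x] ++ v) (by simp)
    rw [show u ++ [x] ++ ([P.inv x] ++ v) = u ++ [x, P.inv x] ++ v by simp] at hinner
    rw [hpeel]
    exact (hinner.tail (P.contract_mul_inv u v x)).tail (P.contract_drop_one u v h)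

theorem contractStar_inv_cancel (u w v : List M) (h : u ++ v ≠ []) :
    P.ContractStar (u ++ P.wInv w ++ w ++ v) (u ++ v) := by
  simpa only [wInv_wInv] using P.contractStar_cancel u (P.wInv w) v h

theorem contractStar_pi_cons (a : M) (t : List M) (h : a :: t ∈ P.D) :
    P.ContractStar (a :: t) [P.pi (a :: t)] := by
  induction t generalizing a with
  | nil => rw [P.pi_single]; exact .refl _
  | cons b t ih =>
    have hD : [] ++ [a, b] ++ t ∈ P.D := h
    have hstep : P.Contract (a :: b :: t) (P.pi [a, b] :: t) :=
      ⟨[], t, a, b, P.mem_D_of_append_left _ t (P.mem_D_of_append_right [] _ hD), rfl, rfl⟩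
    rw [show P.pi (a :: b :: t) = P.pi (P.pi [a, b] :: t) from P.pi_contract [] [a, b] t hD]
    exact .head hstep (ih _ (P.mem_D_contract [] [a, b] t hD))

theorem contractStar_pi {w : List M} (hw : w ∈ P.D) (hne : w ≠ []) :
    P.ContractStar w [P.pi w] := by
  obtain ⟨a, t, rfl⟩ := List.exists_cons_of_ne_nil hne
  exact P.contractStar_pi_cons a t hw

def CommonAncestor (u v : List M) : Prop :=
  ∃ z, P.ContractStar z u ∧ P.ContractStar z v

variable {P}

theorem ContractStar.commonAncestor {u v : List M} (h : P.ContractStar u v) :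
    P.CommonAncestor u v :=
  ⟨u, .refl _, h⟩

theorem CommonAncestor.refl (u : List M) : P.CommonAncestor u u :=
  ⟨u, .refl _, .refl _⟩

theorem CommonAncestor.symm {u v : List M} (h : P.CommonAncestor u v) : P.CommonAncestor v u :=
  let ⟨z, hu, hv⟩ := h; ⟨z, hv, hu⟩

theorem CommonAncestor.append {a b c d : List M} (hab : P.CommonAncestor a b)
    (hcd : P.CommonAncestor c d) : P.CommonAncestor (a ++ c) (b ++ d) :=
  let ⟨z, hza, hzb⟩ := hab
  let ⟨z', hz'c, hz'd⟩ := hcd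
  ⟨z ++ z', hza.append hz'c, hzb.append hz'd⟩

/-- The common ancestor is `z₁ v⁻¹ z₂`, where `z₁ ⇝* u, v` and `z₂ ⇝* v, w`. -/
theorem CommonAncestor.trans {u v w : List M} (h₁ : P.CommonAncestor u v)
    (h₂ : P.CommonAncestor v w) (hv : v ≠ []) : P.CommonAncestor u w := by
  obtain ⟨z₁, hz₁u, hz₁v⟩ := h₁
  obtain ⟨z₂, hz₂v, hz₂w⟩ := h₂
  refine ⟨z₁ ++ P.wInv v ++ z₂, ?_, ?_⟩
  · have hcancel := P.contractStar_inv_cancel z₁ v []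
      (by simpa using ne_nil_of_contractStar hz₁v hv)
    rw [List.append_nil, List.append_nil] at hcancel
    exact (((ContractStar.refl _).append hz₂v).trans hcancel).trans hz₁u
  · have hcancel := P.contractStar_cancel [] v z₂ (ne_nil_of_contractStar hz₂v hv)
    rw [List.nil_append, List.nil_append, List.append_assoc] at hcancel
    rw [List.append_assoc]
    exact ((hz₁v.append (.refl _)).trans hcancel).trans hz₂w

variable (P)

/-- Words are padded by `1` so that the empty word becomes equivalent to `[1]`. -/
def envelopingCon : Con (FreeMonoid M) where
  r u v := P.CommonAncestor (u.toList ++ [P.pi []]) (v.toList ++ [P.pi []])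
  iseqv := ⟨fun _ => .refl _, .symm, fun h₁ h₂ => h₁.trans h₂ (by simp)⟩
  mul' {a b c d} h₁ h₂ := by
    have hpad (x y : List M) :
        P.CommonAncestor (x ++ y ++ [P.pi []]) (x ++ [P.pi []] ++ (y ++ [P.pi []])) := by
      have h := P.contract_drop_one x (y ++ [P.pi []]) (by simp)
      exact (Contract.contractStar (by simpa using h)).commonAncestor.symm
    simp only [FreeMonoid.toList_mul]
    exact ((hpad _ _).trans (h₁.append h₂) (by simp)).trans (hpad _ _).symm (by simp)

abbrev EnvelopingGroup : Type u := (envelopingCon P).Quotient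

theorem envelopingGroup_isUnit (a : P.EnvelopingGroup) : IsUnit a := by
  induction a using Con.induction_on with | H w =>
  refine isUnit_iff_exists.mpr
    ⟨(FreeMonoid.ofList (P.wInv w.toList) : FreeMonoid M), ?_, ?_⟩ <;>
    rw [← Con.coe_mul, ← Con.coe_one, Con.eq] <;>
    show P.CommonAncestor _ _
  · simpa using (P.contractStar_cancel [] w.toList [P.pi []] (by simp)).commonAncestor
  · simpa using (P.contractStar_inv_cancel [] w.toList [P.pi []] (by simp)).commonAncestor

noncomputable instance : Group P.EnvelopingGroup :=
  groupOfIsUnit P.envelopingGroup_isUnit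

def toEnvelopingGroup (x : M) : P.EnvelopingGroup :=
  (FreeMonoid.of x : FreeMonoid M)

theorem prod_map_toEnvelopingGroup (w : List M) :
    (w.map P.toEnvelopingGroup).prod =
      ((FreeMonoid.ofList w : FreeMonoid M) : P.EnvelopingGroup) := by
  induction w with
  | nil => rfl
  | cons x t ih => rw [List.map_cons, List.prod_cons, ih]; rfl

theorem toEnvelopingGroup_pi {w : List M} (hw : w ∈ P.D) :
    P.toEnvelopingGroup (P.pi w) = (w.map P.toEnvelopingGroup).prod := by
  rw [prod_map_toEnvelopingGroup, toEnvelopingGroup, Con.eq]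
  show P.CommonAncestor [P.pi w, P.pi []] (w ++ [P.pi []])
  rcases eq_or_ne w [] with rfl | hne
  · exact (P.contract_one_left [] [] (P.pi [])).contractStar.commonAncestor
  · exact ((P.contractStar_pi hw hne).append (.refl _)).commonAncestor.symm

theorem toEnvelopingGroup_injective (hkind : ∀ w, P.Kind w) :
    Function.Injective P.toEnvelopingGroup := by
  intro f g hfg
  have hpad (x : M) : P.CommonAncestor [x] [x, P.pi []] :=
    (P.contract_one_right [] [] x).contractStar.commonAncestor.symm
  obtain ⟨z, hzf, hzg⟩ :=
    ((hpad f).trans ((Con.eq _).mp hfg) (by simp)).trans (hpad g).symm (by simp)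
  exact hkind z f g hzf hzg

theorem embedsInGroup_of_forall_kind (hkind : ∀ w, P.Kind w) : P.EmbedsInGroup :=
  ⟨P.EnvelopingGroup, inferInstance, P.toEnvelopingGroup, P.toEnvelopingGroup_injective hkind,
    fun _ => P.toEnvelopingGroup_pi⟩

end PartialGroup

/-- (Embeddability criterion.)  A partial group embeds in a group if and only if every
word is kind. -/
theorem embedsInGroup_iff_all_kind {M : Type u} (P : PartialGroup M) :
    P.EmbedsInGroup ↔ ∀ w : List M, P.Kind w :=
  ⟨fun h => h.kind, P.embedsInGroup_of_forall_kind⟩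
end
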